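/- Let α, β ∈ ℂ satisfy αβ(α+β) = −2. Then in R the following polynomial identity holds: ∂F₁/∂x₀ = (−3 + αβ(β−α)/2)·Q₀ + (−3 − αβ(β−α)/2)·Q₀′, where Q₀ = x₀²+x₃²+α(x₂x₄+x₅x₁) and Q₀′ = x₀²−x₃²+β(x₂x₄−x₅x₁). -/

import Mathlib

/-!
Both sides are combinations of the four monomials `x₀², x₃², x₂x₄, x₅x₁`, so it suffices to
compare coefficients. Those of `x₀²` and `x₃²` agree identically; those of `x₂x₄` and `x₅x₁` agree
modulo `αβ(α + β) = -2`.
-/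

open MvPolynomial

noncomputable section

abbrev R6 : Type := MvPolynomial (Fin 6) ℂ

def F1 (α β : ℂ) : R6 :=
  C (2 * (α ^ 2 * β ^ 2 - α - β)) * (X 0 * X 2 * X 4)
    - C 2 * (X 0 ^ 3 + X 2 ^ 3 + X 4 ^ 3)
    + C (2 * (β - α)) * (X 1 * X 2 * X 3 + X 3 * X 4 * X 5 + X 5 * X 0 * X 1)
    + C (α * β * (β - α)) * (X 0 * X 3 ^ 2 + X 2 * X 5 ^ 2 + X 4 * X 1 ^ 2)

def Q0 (α : ℂ) : R6 := X 0 ^ 2 + X 3 ^ 2 + C α * (X 2 * X 4 + X 5 * X 1)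
def Q0' (β : ℂ) : R6 := X 0 ^ 2 - X 3 ^ 2 + C β * (X 2 * X 4 - X 5 * X 1)

lemma pderiv_zero_F1 (α β : ℂ) :
    pderiv (0 : Fin 6) (F1 α β) =
      C (-6) * X 0 ^ 2 + C (α * β * (β - α)) * X 3 ^ 2
        + C (2 * (α ^ 2 * β ^ 2 - α - β)) * (X 2 * X 4) + C (2 * (β - α)) * (X 5 * X 1) := by
  have hX : ∀ i : Fin 6, i ≠ 0 → pderiv (0 : Fin 6) (X i : R6) = 0 := fun i hi =>
    pderiv_X_of_ne hi
  simp only [F1, map_add, map_sub, map_mul, map_pow, pderiv_C, pderiv_X_self,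
    hX 1 (by decide), hX 2 (by decide), hX 3 (by decide), hX 4 (by decide), hX 5 (by decide),
    pderiv_mul, pderiv_pow]
  simp only [map_neg, map_ofNat]
  ring

lemma C_mul_Q0_add_C_mul_Q0' (a b α β : ℂ) :
    C a * Q0 α + C b * Q0' β =
      C (a + b) * X 0 ^ 2 + C (a - b) * X 3 ^ 2
        + C (a * α + b * β) * (X 2 * X 4) + C (a * α - b * β) * (X 5 * X 1) := by
  simp only [Q0, Q0', map_add, map_sub, map_mul]
  ring

/-- By the constraint, `-(α + β) = αβ(α + β)² / 2`, and `(α + β)² - (β - α)² = 4αβ`. -/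
lemma coeff_X2X4_eq {α β : ℂ} (h : α * β * (α + β) = -2) :
    (-3 + α * β * (β - α) / 2) * α + (-3 - α * β * (β - α) / 2) * β
      = 2 * (α ^ 2 * β ^ 2 - α - β) := by
  linear_combination (-(α + β) / 2) * h

lemma coeff_X5X1_eq {α β : ℂ} (h : α * β * (α + β) = -2) :
    (-3 + α * β * (β - α) / 2) * α - (-3 - α * β * (β - α) / 2) * β = 2 * (β - α) := by
  linear_combination ((β - α) / 2) * h

/-- If `αβ(α+β) = −2`, then
`∂F₁/∂x₀ = (−3 + αβ(β−α)/2)·Q₀ + (−3 − αβ(β−α)/2)·Q₀′`. -/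
theorem pderiv_F1_x0 (α β : ℂ) (h : α * β * (α + β) = -2) :
    pderiv (0 : Fin 6) (F1 α β) =
      C (-3 + α * β * (β - α) / 2) * Q0 α + C (-3 - α * β * (β - α) / 2) * Q0' β := by
  have hX0 : (-3 + α * β * (β - α) / 2) + (-3 - α * β * (β - α) / 2) = -6 := by ring
  have hX3 : (-3 + α * β * (β - α) / 2) - (-3 - α * β * (β - α) / 2) = α * β * (β - α) := by
    ring
  rw [pderiv_zero_F1, C_mul_Q0_add_C_mul_Q0', hX0, hX3, coeff_X2X4_eq h, coeff_X5X1_eq h]
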